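/- arXiv:1110.5276 — 2 statements merged into one kernel-verified Lean document; each statement's English description precedes it below -/
import Mathlib

section
/- Let W be the Wronskian matrix of n smooth functions t_1,...,t_n on an interval, and for k ≤ n let W_k denote the Wronskian determinant of t_1,...,t_k, and let C_i^{(k)} denote the determinant obtained from W_k by replacing its i-th column with the k-th standard unit vector. Then for all 1 ≤ i ≤ k < n, the derivative of C_i^{(k+1)}/W_k equals −C_i^{(k)} · W_{k+1}/W_k², provided W_k is nonvanishing. -/
open Matrix


lemma det_via_rows {m : ℕ} (N : Matrix (Fin m) (Fin m) ℝ) :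
    N.det = ∑ σ : Equiv.Perm (Fin m), (Equiv.Perm.sign σ : ℝ) * ∏ i, N i (σ i) := by
  rw [← Matrix.det_transpose, Matrix.det_apply']
  simp [Matrix.transpose_apply]

lemma hasDerivAt_det {m : ℕ} {M : ℝ → Matrix (Fin m) (Fin m) ℝ}
    {M' : Matrix (Fin m) (Fin m) ℝ} {x : ℝ}
    (h : ∀ i j, HasDerivAt (fun t => M t i j) (M' i j) x) :
    HasDerivAt (fun t => (M t).det) (∑ r, ((M x).updateRow r (M' r)).det) x := by
  have key : (fun t => (M t).det)
      = fun t => ∑ σ : Equiv.Perm (Fin m), (Equiv.Perm.sign σ : ℝ) * ∏ i, M t i (σ i) := by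
    funext t; exact det_via_rows _
  rw [key]
  have H : HasDerivAt
      (fun t => ∑ σ : Equiv.Perm (Fin m), (Equiv.Perm.sign σ : ℝ) * ∏ i, M t i (σ i))
      (∑ σ : Equiv.Perm (Fin m), (Equiv.Perm.sign σ : ℝ) *
        ∑ r, (∏ j ∈ Finset.univ.erase r, M x j (σ j)) * M' r (σ r)) x := by
    apply HasDerivAt.fun_sum
    intro σ _
    have := HasDerivAt.finset_prod (u := Finset.univ) (f := fun i t => M t i (σ i))
      (f' := fun i => M' i (σ i)) (fun i _ => h i (σ i))
    simpa [smul_eq_mul] using this.const_mul ((Equiv.Perm.sign σ : ℝ))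
  convert H using 1
  simp only [Finset.mul_sum]
  rw [Finset.sum_comm]
  congr 1
  funext r
  rw [det_via_rows]
  congr 1
  funext σ
  congr 1
  rw [← Finset.prod_erase_mul (a := r) (h := Finset.mem_univ r)]
  congr 1
  · exact Finset.prod_congr rfl (fun j hj => by
      rw [Matrix.updateRow_apply, if_neg (Finset.ne_of_mem_erase hj)])
  · rw [Matrix.updateRow_self]


lemma det_updateCol_single {m : ℕ} (A : Matrix (Fin (m+1)) (Fin (m+1)) ℝ) (c r : Fin (m+1)) :
    (A.updateCol c (Pi.single r 1)).det
      = (-1:ℝ)^((r:ℕ)+(c:ℕ)) * (A.submatrix r.succAbove c.succAbove).det := by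
  rw [Matrix.det_succ_column _ c]
  rw [Finset.sum_eq_single r]
  · rw [Matrix.updateCol_self, Pi.single_eq_same]
    rw [mul_one]
    congr 2
    ext p q
    rw [Matrix.submatrix_apply, Matrix.submatrix_apply,
      Matrix.updateCol_apply, if_neg (Fin.succAbove_ne c q)]
  · intro p _ hp
    rw [Matrix.updateCol_self, Pi.single_eq_of_ne hp, mul_zero, zero_mul]
  · intro h; exact absurd (Finset.mem_univ r) h

lemma det_eq_of_unitcol {m : ℕ} (M N : Matrix (Fin m) (Fin m) ℝ) (c r : Fin m)
    (hM : ∀ p, M p c = (Pi.single r 1 : Fin m → ℝ) p) (hN : ∀ p, N p c = (Pi.single r 1 : Fin m → ℝ) p)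
    (hrow : ∀ p, p ≠ r → M p = N p) : M.det = N.det := by
  have hMN : M = N.updateRow r (N r + (M r - N r)) := by
    ext p q
    by_cases hp : p = r
    · subst hp; simp [Matrix.updateRow_self]
    · rw [Matrix.updateRow_ne hp, hrow p hp]
  rw [hMN, Matrix.det_updateRow_add]
  have h0 : (N.updateRow r (M r - N r)).det = 0 := by
    apply Matrix.det_eq_zero_of_column_eq_zero c
    intro p
    by_cases hp : p = r
    · rw [hp, Matrix.updateRow_self]
      show M r c - N r c = 0
      rw [hM r, hN r]; ring
    · rw [Matrix.updateRow_ne hp, hN p, Pi.single_eq_of_ne hp]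
  rw [h0, Matrix.updateRow_eq_self, add_zero]


lemma det_one_updateColumn {m : ℕ} (p : Fin m) (x : Fin m → ℝ) :
    ((1 : Matrix (Fin m) (Fin m) ℝ).updateCol p x).det = x p := by
  rw [← Matrix.cramer_apply, Matrix.cramer_one]
  rfl

lemma updateColumn_comm' {m : ℕ} (A : Matrix (Fin m) (Fin m) ℝ) {p q : Fin m} (hpq : p ≠ q)
    (x y : Fin m → ℝ) :
    (A.updateCol p x).updateCol q y = (A.updateCol q y).updateCol p x := by
  ext a b
  simp only [Matrix.updateCol_apply]
  rcases eq_or_ne b q with hb | hb <;> rcases eq_or_ne b p with hb' | hb' <;>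
    simp [hb, hb', hpq, Ne.symm hpq]

lemma det_swap_unit {m : ℕ} {p q : Fin m} (hpq : p ≠ q) :
    (((1 : Matrix (Fin m) (Fin m) ℝ).updateCol q (Pi.single p 1)).updateCol p
      (Pi.single q 1)).det = -1 := by
  have h : ((1 : Matrix (Fin m) (Fin m) ℝ).updateCol q (Pi.single p 1)).updateCol p
      (Pi.single q 1) = (Equiv.swap p q).permMatrix ℝ := by
    ext a b
    simp only [Equiv.Perm.permMatrix, PEquiv.toMatrix_apply, Equiv.toPEquiv_apply, Option.mem_def, Option.some_inj]
    simp only [Matrix.updateCol_apply, Matrix.one_apply, Pi.single_apply]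
    rcases eq_or_ne b p with hb | hb
    · rw [if_pos hb, hb]
      rcases eq_or_ne a q with ha | ha
      · simp [ha, Equiv.swap_apply_right]
      · simp only [if_neg ha]
        have : ¬ Equiv.swap p q a = p := by
          intro hh
          exact ha (by simpa using congrArg (Equiv.swap p q) hh)
        simp [this]
    · rw [if_neg hb]
      rcases eq_or_ne b q with hb' | hb'
      · rw [if_pos hb', hb']
        rcases eq_or_ne a p with ha | ha
        · simp [ha, Equiv.swap_apply_left]
        · simp only [if_neg ha]
          have : ¬ Equiv.swap p q a = q := by
            intro hh
            exact ha (by simpa using congrArg (Equiv.swap p q) hh)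
          simp [this]
      · rw [if_neg hb']
        have : Equiv.swap p q a = b ↔ a = b := by
          constructor
          · intro h
            by_cases ha : a = p
            · exact absurd (by rw [← h, ha, Equiv.swap_apply_left]) (Ne.symm hb')
            · by_cases ha' : a = q
              · exact absurd (by rw [← h, ha', Equiv.swap_apply_right]) (Ne.symm hb)
              · rwa [Equiv.swap_apply_of_ne_of_ne ha ha'] at h
          · intro h
            rw [h, Equiv.swap_apply_of_ne_of_ne (h ▸ hb) (h ▸ hb')]
        simp [this]
  rw [h, Matrix.det_permutation, Equiv.Perm.sign_swap hpq]
  simp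

lemma det_one_two_updates {m : ℕ} {p q : Fin m} (hpq : p ≠ q) (x y : Fin m → ℝ) :
    (((1 : Matrix (Fin m) (Fin m) ℝ).updateCol p x).updateCol q y).det
      = x p * y q - x q * y p := by
  have hy : y = ∑ r : Fin m, y r • (Pi.single r 1 : Fin m → ℝ) := by
    funext s
    simp [Pi.single_apply]
  have hdet : ∀ (N : Matrix (Fin m) (Fin m) ℝ) (c : Fin m) (w : Fin m → ℝ),
      (N.updateCol c w).det = ∑ r : Fin m, w r * (N.updateCol c (Pi.single r 1)).det := by
    intro N c w
    rw [← Matrix.cramer_apply]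
    have hw : w = ∑ r : Fin m, w r • (Pi.single r 1 : Fin m → ℝ) := by
      funext s; simp [Pi.single_apply]
    conv_lhs => rw [hw]
    rw [map_sum]
    simp only [LinearMap.map_smul, Finset.sum_apply, Pi.smul_apply, smul_eq_mul,
      Matrix.cramer_apply]
  have key : ∀ r : Fin m,
      (((1 : Matrix (Fin m) (Fin m) ℝ).updateCol p x).updateCol q (Pi.single r 1)).det
      = (if r = q then x p else 0) + (if r = p then -(x q) else 0) := by
    intro r
    rcases eq_or_ne r q with hr | hr
    · rw [if_pos hr, if_neg (hr ▸ fun h => hpq (h ▸ rfl) : r ≠ p), add_zero, hr]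
      have heq : ((1 : Matrix (Fin m) (Fin m) ℝ).updateCol p x).updateCol q
          (Pi.single q 1) = (1 : Matrix (Fin m) (Fin m) ℝ).updateCol p x := by
        ext a b
        simp only [Matrix.updateCol_apply, Matrix.one_apply, Pi.single_apply]
        rcases eq_or_ne b q with hb | hb <;> simp [hb, Ne.symm hpq, eq_comm]
      rw [heq, det_one_updateColumn]
    · rw [if_neg hr]
      rcases eq_or_ne r p with hr' | hr'
      · rw [if_pos hr', zero_add, hr']
        rw [updateColumn_comm' _ hpq]
        rw [hdet]
        have term : ∀ s : Fin m,
            (((1 : Matrix (Fin m) (Fin m) ℝ).updateCol q (Pi.single p 1)).updateCol p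
              (Pi.single s 1)).det = if s = q then -1 else 0 := by
          intro s
          rcases eq_or_ne s q with hs | hs
          · rw [if_pos hs, hs]
            exact det_swap_unit hpq
          · rw [if_neg hs]
            rcases eq_or_ne s p with hs' | hs'
            · apply Matrix.det_zero_of_column_eq hpq
              intro a
              simp [Matrix.updateCol_apply, Ne.symm hpq, hs']
            · apply Matrix.det_zero_of_column_eq hs'
              intro a
              simp [Matrix.updateCol_apply, hs', hs, Matrix.one_apply, Pi.single_apply,
                eq_comm]
        simp only [term, mul_ite, mul_neg, mul_one, mul_zero]
        simp
      · rw [if_neg hr', add_zero]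
        apply Matrix.det_zero_of_column_eq hr
        intro a
        simp [Matrix.updateCol_apply, hr, hr', Matrix.one_apply, Pi.single_apply, eq_comm]
  rw [hdet]
  simp only [key, mul_add, mul_ite, mul_zero]
  rw [Finset.sum_add_distrib]
  simp [Finset.sum_ite_eq', mul_comm, Ne.symm hpq]
  ring

lemma dj_inv {m : ℕ} (A : Matrix (Fin m) (Fin m) ℝ) {p q : Fin m} (hpq : p ≠ q) (a b : Fin m)
    (hA : A.det ≠ 0) :
    A.det * ((A.updateCol p (Pi.single a 1)).updateCol q (Pi.single b 1)).det
    = (A.updateCol p (Pi.single a 1)).det * (A.updateCol q (Pi.single b 1)).det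
      - (A.updateCol q (Pi.single a 1)).det * (A.updateCol p (Pi.single b 1)).det := by
  set x : Fin m → ℝ := Matrix.cramer A (Pi.single a 1) with hx
  set y : Fin m → ℝ := Matrix.cramer A (Pi.single b 1) with hy
  set M : Matrix (Fin m) (Fin m) ℝ :=
    ((1 : Matrix (Fin m) (Fin m) ℝ).updateCol p x).updateCol q y with hM
  have h1 : A * M = (A.updateCol p (A.det • (Pi.single a 1 : Fin m → ℝ))).updateCol q
      (A.det • (Pi.single b 1 : Fin m → ℝ)) := by
    ext i j
    rw [Matrix.mul_apply]
    rcases eq_or_ne j q with hj | hj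
    · rw [hj]
      have : ∑ k, A i k * M k q = (A *ᵥ y) i := by
        rw [Matrix.mulVec]
        simp [dotProduct, hM, Matrix.updateCol_self]
      rw [this, Matrix.mulVec_cramer, Matrix.updateCol_self]
    · rcases eq_or_ne j p with hj' | hj'
      · rw [hj']
        have : ∑ k, A i k * M k p = (A *ᵥ x) i := by
          rw [Matrix.mulVec]
          simp [dotProduct, hM, Matrix.updateCol_apply, Ne.symm hpq, hpq]
        rw [this, Matrix.mulVec_cramer]
        rw [Matrix.updateCol_ne hpq, Matrix.updateCol_self]
      · rw [Matrix.updateCol_ne hj, Matrix.updateCol_ne hj']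
        have : ∀ k, M k j = (1 : Matrix (Fin m) (Fin m) ℝ) k j := by
          intro k
          rw [hM, Matrix.updateCol_ne hj, Matrix.updateCol_ne hj']
        simp only [this, Matrix.one_apply, mul_ite, mul_one, mul_zero]
        simp
  have h2 : (A * M).det = A.det * M.det := Matrix.det_mul _ _
  have h3 : ((A.updateCol p (A.det • (Pi.single a 1 : Fin m → ℝ))).updateCol q
      (A.det • (Pi.single b 1 : Fin m → ℝ))).det
      = A.det * A.det * ((A.updateCol p (Pi.single a 1)).updateCol q
        (Pi.single b 1)).det := by
    rw [Matrix.det_updateCol_smul]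
    rw [updateColumn_comm' _ hpq, Matrix.det_updateCol_smul, updateColumn_comm' _ (Ne.symm hpq)]
    ring
  have h4 : M.det = x p * y q - x q * y p := det_one_two_updates hpq x y
  have h5 : A.det * (x p * y q - x q * y p)
      = A.det * A.det * ((A.updateCol p (Pi.single a 1)).updateCol q
        (Pi.single b 1)).det := by
    rw [← h4, ← h2, h1, h3]
  have h6 := mul_left_cancel₀ hA (by rw [h5]; ring :
    A.det * (x p * y q - x q * y p)
      = A.det * (A.det * ((A.updateCol p (Pi.single a 1)).updateCol q
        (Pi.single b 1)).det))
  rw [← h6]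
  simp only [hx, hy, Matrix.cramer_apply]

lemma dj {m : ℕ} (A : Matrix (Fin m) (Fin m) ℝ) {p q : Fin m} (hpq : p ≠ q) (a b : Fin m) :
    A.det * ((A.updateCol p (Pi.single a 1)).updateCol q (Pi.single b 1)).det
    = (A.updateCol p (Pi.single a 1)).det * (A.updateCol q (Pi.single b 1)).det
      - (A.updateCol q (Pi.single a 1)).det * (A.updateCol p (Pi.single b 1)).det := by
  set f : ℝ → Matrix (Fin m) (Fin m) ℝ := fun ε => A + ε • (1 : Matrix (Fin m) (Fin m) ℝ)
    with hf
  have hcont : Continuous f := by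
    apply continuous_matrix
    intro i j
    simp only [hf, Matrix.add_apply, Matrix.smul_apply, smul_eq_mul]
    fun_prop
  have hpoly : ∀ ε : ℝ, (f ε).det = Polynomial.eval ε (Matrix.charpoly (-A)) := by
    intro ε
    rw [Matrix.charpoly, ← Polynomial.coe_evalRingHom, RingHom.map_det]
    congr 1
    ext i j
    rcases eq_or_ne i j with h | h
    · simp [hf, h, Matrix.charmatrix_apply_eq, Matrix.one_apply, Matrix.add_apply, add_comm]
    · simp [hf, h, Matrix.charmatrix_apply_ne _ _ _ h, Matrix.one_apply, Matrix.add_apply]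
  have hfin : {ε : ℝ | (f ε).det = 0}.Finite := by
    have hne : Matrix.charpoly (-A) ≠ 0 := (Matrix.charpoly_monic _).ne_zero
    have := Polynomial.finite_setOf_isRoot hne
    apply this.subset
    intro ε hε
    simp only [Set.mem_setOf_eq] at hε ⊢
    rw [Polynomial.IsRoot, ← hpoly, hε]
  have hdense : Dense {ε : ℝ | (f ε).det ≠ 0} := by
    have : {ε : ℝ | (f ε).det ≠ 0} = {ε : ℝ | (f ε).det = 0}ᶜ := by
      ext ε; simp
    rw [this]
    exact hfin.countable.dense_compl ℝ
  set G : ℝ → ℝ := fun ε => (f ε).det *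
    (((f ε).updateCol p (Pi.single a 1)).updateCol q (Pi.single b 1)).det with hG
  set H : ℝ → ℝ := fun ε =>
    ((f ε).updateCol p (Pi.single a 1)).det * ((f ε).updateCol q (Pi.single b 1)).det
      - ((f ε).updateCol q (Pi.single a 1)).det * ((f ε).updateCol p (Pi.single b 1)).det
    with hH
  have hGc : Continuous G := by
    apply Continuous.mul (hcont.matrix_det)
    apply Continuous.matrix_det
    apply continuous_matrix
    intro i j
    simp only [Matrix.updateCol_apply]
    by_cases h1 : j = q <;> by_cases h2 : j = p <;>
      simp [h1, h2] <;>
      first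
        | exact continuous_const
        | exact hcont.matrix_elem i j
  have hterm : ∀ (c : Fin m) (v : Fin m → ℝ),
      Continuous fun ε => ((f ε).updateCol c v).det := by
    intro c v
    apply Continuous.matrix_det
    apply continuous_matrix
    intro i j
    simp only [Matrix.updateCol_apply]
    by_cases h1 : j = c <;> simp [h1] <;>
      first
        | exact continuous_const
        | exact hcont.matrix_elem i j
  have hHc : Continuous H := by
    apply Continuous.sub
    · exact (hterm p _).mul (hterm q _)
    · exact (hterm q _).mul (hterm p _)
  have heq : Set.EqOn G H {ε : ℝ | (f ε).det ≠ 0} := fun ε hε => dj_inv (f ε) hpq a b hε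
  have hGH : G = H := Continuous.ext_on hdense hGc hHc heq
  have h0 := congrFun hGH 0
  have hf0 : f 0 = A := by
    simp [hf]
  simpa [hG, hH, hf0] using h0


lemma succAbove_val {m : ℕ} (r : Fin (m+1)) (p : Fin m) :
    ((r.succAbove p : Fin (m+1)) : ℕ) = if (p:ℕ) < (r:ℕ) then (p:ℕ) else (p:ℕ)+1 := by
  rcases lt_or_ge ((p:ℕ)) ((r:ℕ)) with h | h
  · rw [if_pos h, Fin.succAbove_of_castSucc_lt]
    · rfl
    · exact h
  · rw [if_neg (not_lt.mpr h), Fin.succAbove_of_le_castSucc]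
    · rfl
    · exact h


/-- Wronskian determinant of the first `k` of the functions `t`. -/
noncomputable def wronskian (n : ℕ) (t : Fin n → ℝ → ℝ) (k : ℕ) (hk : k ≤ n) (u : ℝ) : ℝ :=
  Matrix.det (fun i j : Fin k => iteratedDeriv i (t (Fin.castLE hk j)) u)

/-- Determinant obtained from the `k`-th Wronskian by replacing column `i`
with the `k`-th standard unit vector. -/
noncomputable def wronskianUnitCol (n : ℕ) (t : Fin n → ℝ → ℝ) (k : ℕ) (hk : k ≤ n)
    (i : Fin k) (u : ℝ) : ℝ :=
  Matrix.det (fun p q : Fin k =>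
    if q = i then (if (p : ℕ) = k - 1 then (1 : ℝ) else 0)
    else iteratedDeriv p (t (Fin.castLE hk q)) u)


set_option maxHeartbeats 2000000 in
theorem stmt0 (n : ℕ) (t : Fin n → ℝ → ℝ) (ht : ∀ j, ContDiff ℝ (⊤ : ℕ∞) (t j))
    (i k : ℕ) (hi : 1 ≤ i) (hik : i ≤ k) (hkn : k < n)
    (hW : ∀ u : ℝ, wronskian n t k (le_of_lt hkn) u ≠ 0) (u : ℝ) :
    deriv (fun x =>
        wronskianUnitCol n t (k + 1) hkn ⟨i - 1, by omega⟩ x /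
          wronskian n t k (le_of_lt hkn) x) u =
      - wronskianUnitCol n t k (le_of_lt hkn) ⟨i - 1, by omega⟩ u *
          wronskian n t (k + 1) hkn u / (wronskian n t k (le_of_lt hkn) u) ^ 2 := by
  have hk1 : 1 ≤ k := le_trans hi hik
  have hik' : i - 1 < k := by omega
  have h1k : i - 1 < k + 1 := by omega
  show deriv (fun x =>
        wronskianUnitCol n t (k + 1) hkn ⟨i - 1, h1k⟩ x /
          wronskian n t k (le_of_lt hkn) x) u =
      - wronskianUnitCol n t k (le_of_lt hkn) ⟨i - 1, hik'⟩ u *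
          wronskian n t (k + 1) hkn u / (wronskian n t k (le_of_lt hkn) u) ^ 2
  set c : Fin (k+1) := ⟨i-1, h1k⟩ with hc
  set rr : Fin (k+1) := ⟨k-1, by omega⟩ with hrr
  set la : Fin (k+1) := Fin.last k with hla
  set c' : Fin k := ⟨i-1, hik'⟩ with hc'
  set rk : Fin k := ⟨k-1, by omega⟩ with hrk
  have hvla : (la:ℕ) = k := rfl
  have hvrr : (rr:ℕ) = k-1 := rfl
  have hvc : (c:ℕ) = i-1 := rfl
  have hcla : c ≠ la := fun h => by
    have := congrArg Fin.val h; rw [hvc, hvla] at this; omega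
  have hrrla : rr ≠ la := fun h => by
    have := congrArg Fin.val h; rw [hvrr, hvla] at this; omega
  set A : ℝ → Matrix (Fin (k+1)) (Fin (k+1)) ℝ :=
    fun v p q => iteratedDeriv (p:ℕ) (t (Fin.castLE hkn q)) v with hA
  set Wm : ℝ → Matrix (Fin k) (Fin k) ℝ :=
    fun v p q => iteratedDeriv (p:ℕ) (t (Fin.castLE (le_of_lt hkn) q)) v with hWm
  -- entrywise derivatives
  have hDentry : ∀ (j : Fin n) (d : ℕ) (x : ℝ),
      HasDerivAt (iteratedDeriv d (t j)) (iteratedDeriv (d+1) (t j) x) x := by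
    intro j d x
    have hdiff : DifferentiableAt ℝ (iteratedDeriv d (t j)) x := by
      have := (ht j).differentiable_iteratedDeriv d
        (by exact_mod_cast lt_top_iff_ne_top.mpr (by simp))
      exact this.differentiableAt
    rw [iteratedDeriv_succ]
    exact hdiff.hasDerivAt
  ----------------------------------------------------------------
  -- Derivative of C := wronskianUnitCol (k+1)
  ----------------------------------------------------------------
  set B : ℝ → Matrix (Fin (k+1)) (Fin (k+1)) ℝ :=
    fun v => (A v).updateCol c (Pi.single la 1) with hB
  set B' : Matrix (Fin (k+1)) (Fin (k+1)) ℝ :=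
    fun p q => if q = c then 0 else iteratedDeriv ((p:ℕ)+1) (t (Fin.castLE hkn q)) u with hB'
  have hBder : ∀ p q, HasDerivAt (fun x => B x p q) (B' p q) u := by
    intro p q
    by_cases hq : q = c
    · have h1 : (fun x => B x p q) = fun _ => (Pi.single la 1 : Fin (k+1) → ℝ) p := by
        funext x
        rw [hB]
        simp only [Matrix.updateCol_apply, if_pos hq]
      rw [h1, hB']
      simp only [if_pos hq]
      exact hasDerivAt_const _ _
    · have h1 : (fun x => B x p q) = iteratedDeriv (p:ℕ) (t (Fin.castLE hkn q)) := by
        funext x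
        rw [hB]
        simp only [Matrix.updateCol_apply, if_neg hq]
        rfl
      rw [h1, hB']
      simp only [if_neg hq]
      exact hDentry _ _ u
  have hCder0 : HasDerivAt (fun x => (B x).det) (∑ r, ((B u).updateRow r (B' r)).det) u :=
    hasDerivAt_det hBder
  -- collapse the sum
  have hzero : ∀ r : Fin (k+1), r ≠ rr → ((B u).updateRow r (B' r)).det = 0 := by
    intro r hrne
    by_cases hlt : (r:ℕ) < k-1
    · apply Matrix.det_zero_of_row_eq (i := r) (j := ⟨(r:ℕ)+1, by omega⟩)
      · intro h; have := congrArg Fin.val h; simp at this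
      · funext q
        rw [Matrix.updateRow_self, Matrix.updateRow_ne (by
          intro h; have := congrArg Fin.val h; simp at this)]
        by_cases hq : q = c
        · rw [hB']
          simp only [if_pos hq]
          rw [hB]
          simp only [Matrix.updateCol_apply, if_pos hq]
          rw [Pi.single_apply, if_neg (by
            intro h; have := congrArg Fin.val h
            simp only [hla, Fin.val_last, Fin.val_mk] at this; omega)]
        · rw [hB']
          simp only [if_neg hq]
          rw [hB]
          simp only [Matrix.updateCol_apply, if_neg hq]
          rfl
    · have hrla : r = la := by
        have hr := r.isLt
        have : (r:ℕ) ≠ k-1 := fun h => hrne (Fin.ext (by rw [h, hvrr]))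
        exact Fin.ext (by rw [hvla]; omega)
      apply Matrix.det_eq_zero_of_column_eq_zero c
      intro p
      by_cases hp : p = r
      · rw [hp, Matrix.updateRow_self, hB']
        simp
      · rw [Matrix.updateRow_ne hp]
        have hBc : (B u) p c = (Pi.single la 1 : Fin (k+1) → ℝ) p := by
          simp only [hB, Matrix.updateCol_self]
        rw [hBc, Pi.single_apply, if_neg (fun hh => hp (hh.trans hrla.symm))]
  have hCsum : (∑ r, ((B u).updateRow r (B' r)).det) = ((B u).updateRow rr (B' rr)).det := by
    rw [Finset.sum_eq_single rr]
    · intro r _ hrne; exact hzero r hrne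
    · intro h; exact absurd (Finset.mem_univ rr) h
  -- identify the remaining term with -Y
  set g : Fin (k+1) → ℝ := fun q => iteratedDeriv k (t (Fin.castLE hkn q)) u with hg
  have hrridx : (rr:ℕ) + 1 = k := by rw [hvrr]; omega
  have hrow_eq : (B u).updateRow rr (B' rr)
      = ((A u).updateRow rr g).updateCol c (Pi.single la 1) := by
    ext p q
    by_cases hp : p = rr
    · by_cases hq : q = c
      · simp only [hp, hq, Matrix.updateRow_self, Matrix.updateCol_self, hB',
          Pi.single_apply]
        simp [hrrla]
      · simp only [hp, hq, Matrix.updateRow_self, Matrix.updateCol_apply, if_neg hq, hB',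
          if_neg hq, Matrix.updateRow_self, hg, hrridx]
        simp
    · by_cases hq : q = c
      · simp only [Matrix.updateRow_ne hp, hq, Matrix.updateCol_self, hB]
      · simp only [Matrix.updateRow_ne hp, Matrix.updateCol_apply, if_neg hq, hB,
          Matrix.updateRow_ne hp]
  have hsub_eq : ((A u).updateRow rr g).submatrix la.succAbove c.succAbove
      = (A u).submatrix rr.succAbove c.succAbove := by
    ext p q
    rw [Matrix.submatrix_apply, Matrix.submatrix_apply, Fin.succAbove_last]
    by_cases hp : (p:ℕ) = k-1
    · have hcast : Fin.castSucc p = rr := Fin.ext (by simp [Fin.coe_castSucc, hp, hvrr])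
      rw [hcast, Matrix.updateRow_self, hg, hA]
      have : ((rr.succAbove p : Fin (k+1)) : ℕ) = k := by
        rw [succAbove_val, hvrr, if_neg (by omega), hp]; omega
      simp only []
      rw [this]
    · have hcast : Fin.castSucc p ≠ rr := fun h => hp (by
        have := congrArg Fin.val h; rwa [Fin.coe_castSucc, hvrr] at this)
      rw [Matrix.updateRow_ne hcast, hA]
      have hlt : (p:ℕ) < k-1 := by have := p.isLt; omega
      have : ((rr.succAbove p : Fin (k+1)) : ℕ) = (p:ℕ) := by
        rw [succAbove_val, hvrr, if_pos hlt]
      simp only []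
      rw [this, Fin.coe_castSucc]
  have hsign : ((-1:ℝ))^((la:ℕ)+(c:ℕ)) = -((-1:ℝ))^((rr:ℕ)+(c:ℕ)) := by
    rw [hvla, hvrr]
    have : k + (c:ℕ) = (k - 1 + (c:ℕ)) + 1 := by omega
    rw [this, pow_succ]
    ring
  have hCderiv_eq : ((B u).updateRow rr (B' rr)).det
      = -(((A u).updateCol c (Pi.single rr 1)).det) := by
    rw [hrow_eq, det_updateCol_single, det_updateCol_single, hsub_eq, hsign]
    ring
  ----------------------------------------------------------------
  -- Derivative of W (the k × k Wronskian)
  ----------------------------------------------------------------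
  have hvrk : (rk:ℕ) = k-1 := rfl
  have hvc' : (c':ℕ) = i-1 := rfl
  set Wm' : Matrix (Fin k) (Fin k) ℝ :=
    fun p q => iteratedDeriv ((p:ℕ)+1) (t (Fin.castLE (le_of_lt hkn) q)) u with hWm'
  have hWmder : ∀ p q, HasDerivAt (fun x => Wm x p q) (Wm' p q) u := by
    intro p q
    have hfun : (fun x => Wm x p q) = iteratedDeriv (p:ℕ) (t (Fin.castLE (le_of_lt hkn) q)) := by
      funext x; simp only [hWm]
    rw [hfun, hWm']
    exact hDentry _ _ u
  have hWder0 : HasDerivAt (fun x => (Wm x).det) (∑ r, ((Wm u).updateRow r (Wm' r)).det) u :=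
    hasDerivAt_det hWmder
  set gk : Fin k → ℝ := fun q => iteratedDeriv k (t (Fin.castLE (le_of_lt hkn) q)) u with hgk
  have hWzero : ∀ r : Fin k, r ≠ rk → ((Wm u).updateRow r (Wm' r)).det = 0 := by
    intro r hrne
    have hlt : (r:ℕ) < k-1 := by
      have hb := r.isLt
      have h2 : (r:ℕ) ≠ k-1 := fun h => hrne (Fin.ext (by rw [h]))
      omega
    apply Matrix.det_zero_of_row_eq (i := r) (j := (⟨(r:ℕ)+1, by omega⟩ : Fin k))
    · intro h; have := congrArg Fin.val h; simp at this
    · funext q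
      rw [Matrix.updateRow_self, Matrix.updateRow_ne (by
        intro h; have := congrArg Fin.val h; simp at this)]
  have hWsum : (∑ r, ((Wm u).updateRow r (Wm' r)).det) = ((Wm u).updateRow rk gk).det := by
    rw [Finset.sum_eq_single rk (fun r _ hrne => hWzero r hrne)
      (fun h => absurd (Finset.mem_univ rk) h)]
    congr 1
    ext p q
    by_cases hp : p = rk
    · rw [hp, Matrix.updateRow_self, Matrix.updateRow_self]
      simp only [hWm', hgk]
      have hidx : (rk:ℕ)+1 = k := by rw [hvrk]; omega
      rw [hidx]
    · rw [Matrix.updateRow_ne hp, Matrix.updateRow_ne hp]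
  ----------------------------------------------------------------
  -- E4 : det (A upd la e_la) = det Wm
  ----------------------------------------------------------------
  have hcastLE : ∀ q : Fin k, Fin.castLE hkn (la.succAbove q) = Fin.castLE (le_of_lt hkn) q := by
    intro q
    apply Fin.ext
    simp only [Fin.coe_castLE]
    rw [succAbove_val, if_pos (by rw [hvla]; exact q.isLt)]
  have hE4 : ((A u).updateCol la (Pi.single la 1)).det = (Wm u).det := by
    rw [det_updateCol_single]
    have hsub : (A u).submatrix la.succAbove la.succAbove = Wm u := by
      ext p q
      rw [Matrix.submatrix_apply]
      simp only [hA, hWm]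
      have hr : ((la.succAbove p : Fin (k+1)) : ℕ) = (p:ℕ) := by
        rw [succAbove_val, if_pos (by rw [hvla]; exact p.isLt)]
      rw [hr, hcastLE q]
    rw [hsub, hvla]
    have hsgn : (-1:ℝ)^(k+k) = 1 := by
      rw [show k + k = 2*k by ring, pow_mul]
      norm_num
    rw [hsgn, one_mul]
  ----------------------------------------------------------------
  -- E5 : det (A upd la e_rr) = - w'
  ----------------------------------------------------------------
  have hsuccrr : ∀ p : Fin k, ((rr.succAbove p : Fin (k+1)) : ℕ)
      = if (p:ℕ) < k-1 then (p:ℕ) else (p:ℕ)+1 := by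
    intro p
    rw [succAbove_val, hvrr]
  have hE5 : ((A u).updateCol la (Pi.single rr 1)).det = -(((Wm u).updateRow rk gk).det) := by
    rw [det_updateCol_single]
    have hsub : (A u).submatrix rr.succAbove la.succAbove = (Wm u).updateRow rk gk := by
      ext p q
      rw [Matrix.submatrix_apply]
      by_cases hp : p = rk
      · rw [hp, Matrix.updateRow_self]
        simp only [hA, hgk]
        have hr : ((rr.succAbove rk : Fin (k+1)) : ℕ) = k := by
          rw [hsuccrr, if_neg (by rw [hvrk]; omega), hvrk]; omega
        rw [hr, hcastLE q]
      · rw [Matrix.updateRow_ne hp]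
        simp only [hA, hWm]
        have hplt : (p:ℕ) < k-1 := by
          have hb := p.isLt
          have h2 : (p:ℕ) ≠ k-1 := fun h => hp (Fin.ext (by rw [h]))
          omega
        have hr : ((rr.succAbove p : Fin (k+1)) : ℕ) = (p:ℕ) := by
          rw [hsuccrr, if_pos hplt]
        rw [hr, hcastLE q]
    rw [hsub, hvrr, hvla]
    have hsgn : (-1:ℝ)^(k-1+k) = -1 := Odd.neg_one_pow ⟨k-1, by omega⟩
    rw [hsgn]
    ring
  ----------------------------------------------------------------
  -- E6 : det ((A upd c e_la) upd la e_rr) = - Ck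
  ----------------------------------------------------------------
  set T : Matrix (Fin k) (Fin k) ℝ := fun p q =>
    if q = c' then (if (p:ℕ) = k-1 then (1:ℝ) else 0)
    else iteratedDeriv (p:ℕ) (t (Fin.castLE (le_of_lt hkn) q)) u with hT
  have hWT : wronskianUnitCol n t k (le_of_lt hkn) ⟨i-1, hik'⟩ u = T.det := rfl
  have hiff : ∀ p : Fin k, (rr.succAbove p = la) ↔ (p = rk) := by
    intro p
    rw [Fin.ext_iff, Fin.ext_iff, hsuccrr, hvla, hvrk]
    have hb := p.isLt
    split_ifs <;> omega
  have hE6 : (((A u).updateCol c (Pi.single la 1)).updateCol la (Pi.single rr 1)).det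
      = - wronskianUnitCol n t k (le_of_lt hkn) ⟨i-1, hik'⟩ u := by
    rw [det_updateCol_single]
    have hST : (((A u).updateCol c (Pi.single la 1)).submatrix rr.succAbove la.succAbove).det
        = T.det := by
      apply det_eq_of_unitcol _ _ c' rk
      · intro p
        rw [Matrix.submatrix_apply]
        have h2 : la.succAbove c' = c := Fin.ext (by
          rw [succAbove_val, if_pos (by rw [hvla]; exact c'.isLt)])
        rw [h2, Matrix.updateCol_self, Pi.single_apply, Pi.single_apply,
          if_congr (hiff p) rfl rfl]
      · intro p
        simp only [hT, if_pos rfl, Pi.single_apply]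
        rw [if_congr (by rw [Fin.ext_iff, hvrk] : ((p:ℕ) = k-1) ↔ (p = rk)) rfl rfl]
      · intro p hp
        funext q
        rw [Matrix.submatrix_apply]
        by_cases hq : q = c'
        · have h2 : la.succAbove q = c := Fin.ext (by
            rw [succAbove_val, if_pos (by rw [hvla]; exact q.isLt), hq])
          rw [h2, Matrix.updateCol_self, Pi.single_apply,
            if_neg (fun hh => hp ((hiff p).mp hh))]
          simp only [hT, hq, if_pos rfl]
          rw [if_neg (fun hh => hp (Fin.ext (by rw [hh])))]
        · have h2 : la.succAbove q ≠ c := by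
            intro hh
            apply hq
            apply Fin.ext
            have := congrArg Fin.val hh
            rw [succAbove_val, if_pos (by rw [hvla]; exact q.isLt)] at this
            rw [this]
          rw [Matrix.updateCol_ne h2]
          simp only [hA, hT, if_neg hq]
          have hplt : (p:ℕ) < k-1 := by
            have hb := p.isLt
            have hne2 : (p:ℕ) ≠ k-1 := fun h => hp (Fin.ext (by rw [h]))
            omega
          have hr : ((rr.succAbove p : Fin (k+1)) : ℕ) = (p:ℕ) := by
            rw [hsuccrr, if_pos hplt]
          rw [hr, hcastLE q]
    rw [hST, hWT, hvrr, hvla]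
    have hsgn : (-1:ℝ)^(k-1+k) = -1 := Odd.neg_one_pow ⟨k-1, by omega⟩
    rw [hsgn]
    ring
  ----------------------------------------------------------------
  -- assemble via Desnanot–Jacobi
  ----------------------------------------------------------------
  have hdj := dj (A u) hcla la rr
  rw [hE4, hE5, hE6] at hdj
  -- derivative of C as the statement's function
  have hfunC : (fun x => wronskianUnitCol n t (k + 1) hkn ⟨i - 1, h1k⟩ x)
      = fun x => (B x).det := by
    funext x
    show Matrix.det _ = Matrix.det _
    congr 1
    ext p q
    by_cases hq : q = c
    · rw [if_pos hq, hB]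
      simp only [Matrix.updateCol_apply, if_pos hq, Pi.single_apply]
      rw [if_congr (by rw [Fin.ext_iff, hvla]; omega : ((p:ℕ) = k+1-1) ↔ (p = la)) rfl rfl]
    · rw [if_neg hq, hB]
      simp only [Matrix.updateCol_apply, if_neg hq]
      rfl
  have hCder : HasDerivAt (fun x => wronskianUnitCol n t (k + 1) hkn ⟨i - 1, h1k⟩ x)
      (-(((A u).updateCol c (Pi.single rr 1)).det)) u := by
    rw [hfunC, ← hCderiv_eq, ← hCsum]
    exact hCder0
  have hWder : HasDerivAt (fun x => wronskian n t k (le_of_lt hkn) x)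
      (((Wm u).updateRow rk gk).det) u := by
    have hfunW : (fun x => wronskian n t k (le_of_lt hkn) x) = fun x => (Wm x).det := rfl
    rw [hfunW, ← hWsum]
    exact hWder0
  have hdiv := (hCder.fun_div hWder (hW u)).deriv
  rw [hdiv]
  have hCu : wronskianUnitCol n t (k + 1) hkn ⟨i - 1, h1k⟩ u
      = ((A u).updateCol c (Pi.single la 1)).det := by
    have := congrFun hfunC u
    rw [this, hB]
  have hWu : wronskian n t k (le_of_lt hkn) u = (Wm u).det := rfl
  have hWk1 : wronskian n t (k + 1) hkn u = (A u).det := rfl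
  rw [hCu]
  have hnum : -((A u).updateCol c (Pi.single rr 1)).det * wronskian n t k (le_of_lt hkn) u
      - ((A u).updateCol c (Pi.single la 1)).det * ((Wm u).updateRow rk gk).det
      = -wronskianUnitCol n t k (le_of_lt hkn) ⟨i-1, hik'⟩ u * wronskian n t (k+1) hkn u := by
    rw [hWu, hWk1]
    linear_combination -hdj
  rw [hnum]
end

section
/- Exact ruin probability formula (Tichy): in the compound Poisson model with exponential(μ) claims, intensity λ, and monotone premium function p with p > 0, the function ψ(u) = ∫ᵤ^∞ (γ₀λ/p(x)) exp(λq(x) − μx) dx, with 1/γ₀ = 1 + λ∫₀^∞ p(x)^{-1} exp(λq(x) − μx) dx and q(x) = ∫₀ˣ dy/p(y), satisfies the integro-differential ruin equation p(u)ψ'(u) = λψ(u) − λ∫₀ᵘ ψ(u−y) μe^{−μy} dy − λ e^{−μu}, together with ψ(∞) = 0. -/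
open MeasureTheory Filter

/-- `q x = ∫₀ˣ dy / p(y)`. -/
noncomputable def qfun (p : ℝ → ℝ) (x : ℝ) : ℝ := ∫ y in (0 : ℝ)..x, 1 / p y

/-- The normalizing constant `γ₀` in Tichy's ruin probability formula. -/
noncomputable def gamma0 (p : ℝ → ℝ) (lam mu : ℝ) : ℝ :=
  (1 + lam * ∫ x in Set.Ioi (0 : ℝ), Real.exp (lam * qfun p x - mu * x) / p x)⁻¹

/-- Tichy's ruin probability. -/
noncomputable def ruinProb (p : ℝ → ℝ) (lam mu : ℝ) (u : ℝ) : ℝ :=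
  ∫ x in Set.Ioi u, gamma0 p lam mu * lam / p x * Real.exp (lam * qfun p x - mu * x)

/-!
Writing `ψ` for `ruinProb`, `ψ' = -γ₀ λ e^{λq - μu} / p`, so `p ψ' = -γ₀ λ e^{λq(u) - μu}`.
After multiplication by `e^{μu}` the ruin equation says that
`H u = e^{μu} ψ(u) - μ ∫₀ᵘ ψ(y) e^{μy} dy + γ₀ e^{λq(u)}` is the constant `1`: its derivative
vanishes identically, and `H 0 = ψ(0) + γ₀ = 1` is exactly the choice of `γ₀`.
The limit `ψ(∞) = 0` holds because `ψ(u)` is the tail of an integral.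
-/

open Set

section TailIntegral

variable {E : Type*} [NormedAddCommGroup E]

theorem MeasureTheory.IntegrableOn.Ioi_of_continuous {g : ℝ → E} {a : ℝ} (hg : Continuous g)
    (hint : IntegrableOn g (Ioi a)) (b : ℝ) : IntegrableOn g (Ioi b) := by
  refine ((hg.integrableOn_Icc (a := b) (b := a)).union hint).mono_set fun x (hx : b < x) => ?_
  rcases le_or_gt x a with h | h
  · exact Or.inl ⟨hx.le, h⟩
  · exact Or.inr h

theorem hasDerivAt_integral_Ioi [NormedSpace ℝ E] [CompleteSpace E] {g : ℝ → E} {a : ℝ} (hg : Continuous g)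
    (hint : IntegrableOn g (Ioi a)) (u : ℝ) :
    HasDerivAt (fun v => ∫ x in Ioi v, g x) (-g u) u := by
  have htail : (fun v => ∫ x in Ioi v, g x) = fun v => (∫ x in Ioi a, g x) - ∫ x in a..v, g x := by
    funext v
    rw [← intervalIntegral.integral_Ioi_sub_Ioi' hint (hint.Ioi_of_continuous hg v), sub_sub_cancel]
  rw [htail]
  exact ((hg.integral_hasStrictDerivAt a u).hasDerivAt).const_sub _

end TailIntegral

section RuinProbability

variable {p : ℝ → ℝ} {lam mu : ℝ}

theorem qfun_zero : qfun p 0 = 0 := intervalIntegral.integral_same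

theorem hasDerivAt_qfun (hp : Continuous p) (hp0 : ∀ x, p x ≠ 0) (x : ℝ) :
    HasDerivAt (qfun p) (1 / p x) x :=
  ((continuous_const.div hp hp0).integral_hasStrictDerivAt 0 x).hasDerivAt

theorem hasDerivAt_ruinProb (hp : Continuous p) (hp0 : ∀ x, p x ≠ 0)
    (hint : IntegrableOn (fun x => Real.exp (lam * qfun p x - mu * x) / p x) (Ioi 0)) (u : ℝ) :
    HasDerivAt (ruinProb p lam mu)
      (-(gamma0 p lam mu * lam / p u * Real.exp (lam * qfun p u - mu * u))) u := by
  have hq : Continuous (qfun p) :=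
    continuous_iff_continuousAt.2 fun x => (hasDerivAt_qfun hp hp0 x).continuousAt
  have hg : Continuous fun x => gamma0 p lam mu * lam / p x * Real.exp (lam * qfun p x - mu * x) :=
    by fun_prop (disch := exact hp0 _)
  unfold ruinProb
  refine hasDerivAt_integral_Ioi hg (a := 0) ?_ u
  refine IntegrableOn.congr_fun (hint.const_mul (gamma0 p lam mu * lam)) (fun x _ => ?_)
    measurableSet_Ioi
  ring

theorem ruinProb_zero (hlam : 0 ≤ lam) (hp : ∀ x, 0 < p x) :
    ruinProb p lam mu 0 = 1 - gamma0 p lam mu := by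
  set I := ∫ x in Ioi (0 : ℝ), Real.exp (lam * qfun p x - mu * x) / p x
  have hI : 0 ≤ I :=
    setIntegral_nonneg measurableSet_Ioi fun x _ => div_nonneg (Real.exp_pos _).le (hp x).le
  have hψ : ruinProb p lam mu 0 = gamma0 p lam mu * lam * I := by
    rw [ruinProb, ← integral_const_mul]
    congr 1 with x
    ring
  have hγ : gamma0 p lam mu = (1 + lam * I)⁻¹ := rfl
  have hden : 1 + lam * I ≠ 0 := by positivity
  rw [hψ, hγ]
  field_simp
  ring

theorem exp_mul_ruinProb_sub_integral (hlam : 0 ≤ lam) (hp : Continuous p) (hppos : ∀ x, 0 < p x)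
    (hint : IntegrableOn (fun x => Real.exp (lam * qfun p x - mu * x) / p x) (Ioi 0)) (u : ℝ) :
    Real.exp (mu * u) * ruinProb p lam mu u
        - mu * ∫ y in (0 : ℝ)..u, ruinProb p lam mu y * Real.exp (mu * y)
      = 1 - gamma0 p lam mu * Real.exp (lam * qfun p u) := by
  have hp0 : ∀ x, p x ≠ 0 := fun x => (hppos x).ne'
  have hψ := hasDerivAt_ruinProb (lam := lam) (mu := mu) hp hp0 hint
  have hψC : Continuous (ruinProb p lam mu) :=
    continuous_iff_continuousAt.2 fun x => (hψ x).continuousAt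
  set H : ℝ → ℝ := fun u => Real.exp (mu * u) * ruinProb p lam mu u
    - mu * (∫ y in (0 : ℝ)..u, ruinProb p lam mu y * Real.exp (mu * y))
    + gamma0 p lam mu * Real.exp (lam * qfun p u)
  have hH' : ∀ x, HasDerivAt H 0 x := by
    intro x
    have hconv : HasDerivAt (fun v => ∫ y in (0 : ℝ)..v, ruinProb p lam mu y * Real.exp (mu * y))
        (ruinProb p lam mu x * Real.exp (mu * x)) x :=
      ((hψC.mul (Real.continuous_exp.comp (continuous_const_mul mu))).integral_hasStrictDerivAt
        0 x).hasDerivAt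
    refine (((((hasDerivAt_id x).const_mul mu).exp.mul (hψ x)).sub (hconv.const_mul mu)).add
      (((hasDerivAt_qfun hp hp0 x).const_mul lam).exp.const_mul (gamma0 p lam mu))).congr_deriv ?_
    rw [id, Real.exp_sub]
    field_simp [hp0 x]
    ring
  have hH0 : H 0 = 1 := by
    simp [H, qfun_zero, ruinProb_zero hlam hppos]
  have hHu : H u = 1 := by
    rw [← hH0]
    exact is_const_of_deriv_eq_zero (fun x => (hH' x).differentiableAt) (fun x => (hH' x).deriv) u 0
  simp only [H] at hHu
  linarith

end RuinProbability

theorem stmt13_general (p : ℝ → ℝ) (lam mu : ℝ) (hlam : 0 < lam)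
    (hp : ContDiff ℝ 1 p) (hppos : ∀ u, 0 < p u)
    (hint : IntegrableOn (fun x => Real.exp (lam * qfun p x - mu * x) / p x)
      (Set.Ioi (0 : ℝ))) :
    (∀ u ∈ Set.Ici (0 : ℝ),
        p u * deriv (ruinProb p lam mu) u - lam * ruinProb p lam mu u +
          lam * mu * (∫ y in (0 : ℝ)..u, ruinProb p lam mu y * Real.exp (-mu * (u - y))) +
          lam * Real.exp (-mu * u) = 0) ∧
      Tendsto (ruinProb p lam mu) atTop (nhds 0) := by
  refine ⟨fun u _ => ?_, tendsto_integral_Ioi_zero tendsto_id⟩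
  have hconv : (∫ y in (0 : ℝ)..u, ruinProb p lam mu y * Real.exp (-mu * (u - y)))
      = (Real.exp (mu * u))⁻¹ * ∫ y in (0 : ℝ)..u, ruinProb p lam mu y * Real.exp (mu * y) := by
    rw [← intervalIntegral.integral_const_mul]
    congr 1 with y
    rw [show -mu * (u - y) = -(mu * u) + mu * y by ring, Real.exp_add, Real.exp_neg]
    ring
  have hkey := exp_mul_ruinProb_sub_integral hlam.le hp.continuous hppos hint u
  rw [(hasDerivAt_ruinProb hp.continuous (fun x => (hppos x).ne') hint u).deriv, hconv,
    Real.exp_sub, neg_mul, Real.exp_neg]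
  field_simp [(hppos u).ne']
  linear_combination (-lam) * hkey

theorem stmt13 (p : ℝ → ℝ) (lam mu : ℝ) (hlam : 0 < lam) (hmu : 0 < mu)
    (hp : ContDiff ℝ 1 p) (hppos : ∀ u, 0 < p u)
    (hint : IntegrableOn (fun x => Real.exp (lam * qfun p x - mu * x) / p x)
      (Set.Ioi (0 : ℝ))) :
    (∀ u ∈ Set.Ici (0 : ℝ),
        p u * deriv (ruinProb p lam mu) u - lam * ruinProb p lam mu u +
          lam * mu * (∫ y in (0 : ℝ)..u, ruinProb p lam mu y * Real.exp (-mu * (u - y))) +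
          lam * Real.exp (-mu * u) = 0) ∧
      Tendsto (ruinProb p lam mu) atTop (nhds 0) :=
  stmt13_general p lam mu hlam hp hppos hint
end
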